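/- arXiv:math/0408406 — 3 statements merged into one kernel-verified Lean document; each statement's English description precedes it below -/
import Mathlib

section
/- For a, b > 0, the Fourier transform of h(t) = t(t - ib) e^{-a²t²}/(t² + b²) is ĥ(w) = -(1/a) e^{a²b²} ( πab e^{2πbw} erfc((a²b + πw)/a) - √π e^{-(a⁴b² + π²w²)/a²} ). -/
open Real Complex MeasureTheory Set

noncomputable def erfc (x : ℝ) : ℝ := (2 / Real.sqrt π) * ∫ u in Set.Ioi x, Real.exp (-u ^ 2)

namespace FTHaux

/-- ∫₀^∞ e^{z s} ds = -1/z for Re z < 0 -/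
lemma integral_cexp_Ioi {z : ℂ} (hz : z.re < 0) :
    ∫ s in Ioi (0:ℝ), Complex.exp (z * s) = -z⁻¹ := by
  have hz0 : z ≠ 0 := fun h => by simp [h] at hz
  have hint : IntegrableOn (fun s : ℝ => Complex.exp (z * s)) (Ioi 0) := by
    refine (exp_neg_integrableOn_Ioi 0 (by linarith : 0 < -z.re)).mono' ?_ ?_
    · exact (Complex.continuous_exp.comp (continuous_const.mul Complex.continuous_ofReal)).aestronglyMeasurable.restrict
    · filter_upwards with s
      simp [Complex.norm_exp, Complex.mul_re, neg_mul]
  have hderiv : ∀ x ∈ Ici (0:ℝ), HasDerivAt (fun s : ℝ => z⁻¹ * Complex.exp (z * s))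
      (Complex.exp (z * x)) x := by
    intro x _
    have h1 : HasDerivAt (fun s : ℝ => z * (s : ℂ)) z x := by
      simpa using (Complex.ofRealCLM.hasDerivAt (x := x)).const_mul z
    have h2 := (h1.cexp).const_mul z⁻¹
    rw [mul_comm (Complex.exp _) z, ← mul_assoc, inv_mul_cancel₀ hz0, one_mul] at h2
    exact h2
  have htend : Filter.Tendsto (fun s : ℝ => z⁻¹ * Complex.exp (z * s)) Filter.atTop (nhds 0) := by
    rw [tendsto_zero_iff_norm_tendsto_zero]
    have : (fun s : ℝ => ‖z⁻¹ * Complex.exp (z * s)‖) = fun s => ‖z⁻¹‖ * Real.exp (-((-z.re) * s)) := by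
      ext s
      rw [norm_mul]
      congr 1
      rw [Complex.norm_exp]
      congr 1
      simp [Complex.mul_re]
    rw [this]
    rw [show (0:ℝ) = ‖z⁻¹‖ * 0 by ring]
    exact (Real.tendsto_exp_neg_atTop_nhds_zero.comp
      (Filter.Tendsto.const_mul_atTop (by linarith) Filter.tendsto_id)).const_mul _
  have := integral_Ioi_of_hasDerivAt_of_tendsto' hderiv hint htend
  simpa using this

/-- Gaussian integral with real oscillation -/
lemma gauss_int {a : ℝ} (ha : 0 < a) (c : ℝ) :
    ∫ t : ℝ, Complex.exp (-(a:ℂ)^2 * t^2 + Complex.I * c * t) =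
      (Real.sqrt π / a) * Complex.exp (-(c:ℂ)^2 / (4 * (a:ℂ)^2)) := by
  have hre : 0 < ((a:ℂ)^2).re := by
    simp only [← Complex.ofReal_pow, Complex.ofReal_re]
    positivity
  have h := fourierIntegral_gaussian hre (c : ℂ)
  have heq : ∀ t : ℝ, Complex.exp (-(a:ℂ)^2 * t^2 + Complex.I * c * t) =
      Complex.exp (Complex.I * c * t) * Complex.exp (-(a:ℂ)^2 * t^2) := by
    intro t; rw [← Complex.exp_add]; ring_nf
  simp_rw [heq]
  rw [h]
  congr 1
  have hpos : (0:ℝ) ≤ π / a^2 := by positivity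
  have h1 : (↑π / (a:ℂ)^2) = ((π / a^2 : ℝ) : ℂ) := by push_cast; ring
  rw [h1]
  rw [show (1/2 : ℂ) = (((1/2:ℝ)) : ℂ) by norm_num]
  rw [← Complex.ofReal_cpow hpos]
  rw [← Real.sqrt_eq_rpow, Real.sqrt_div (le_of_lt Real.pi_pos), Real.sqrt_sq ha.le]
  push_cast
  ring


/-- translation for integrals over Ioi -/
lemma integral_comp_add_right_Ioi (g : ℝ → ℝ) (c d : ℝ) :
    ∫ x in Ioi c, g (x + d) = ∫ x in Ioi (c + d), g x := by
  have hmp : MeasurePreserving (fun x : ℝ => x + d) volume volume :=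
    measurePreserving_add_right volume d
  have hemb : MeasurableEmbedding (fun x : ℝ => x + d) :=
    (Homeomorph.addRight d).measurableEmbedding
  have := hmp.setIntegral_preimage_emb hemb g (Ioi (c + d))
  rw [show (fun x : ℝ => x + d) ⁻¹' Ioi (c + d) = Ioi c by
    ext x; simp [mem_Ioi]] at this
  exact this

/-- the key real integral evaluation -/
lemma K_eval (a b w : ℝ) (ha : 0 < a) :
    ∫ s in Ioi (0:ℝ), Real.exp (-(s*b) - (s + 2*π*w)^2/(4*a^2))
      = Real.exp (a^2*b^2 + 2*π*b*w) * ((2*a) *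
          ∫ v in Ioi (a*b + π*w/a), Real.exp (-v^2)) := by
  have key : ∀ s : ℝ, -(s*b) - (s + 2*π*w)^2/(4*a^2)
      = (a^2*b^2 + 2*π*b*w) + -((1/(2*a))*s + (a*b + π*w/a))^2 := by
    intro s; field_simp; ring
  simp_rw [key, Real.exp_add]
  rw [MeasureTheory.integral_const_mul]
  congr 1
  have h2a : (0:ℝ) < 1/(2*a) := by positivity
  have := integral_comp_mul_left_Ioi
    (fun y : ℝ => Real.exp (-(y + (a*b + π*w/a))^2)) 0 h2a
  simp only [mul_zero, smul_eq_mul] at this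
  rw [show (∫ s in Ioi (0:ℝ), Real.exp (-((1/(2*a))*s + (a*b + π*w/a))^2))
      = ∫ s in Ioi (0:ℝ), (fun y : ℝ => Real.exp (-(y + (a*b + π*w/a))^2)) ((1/(2*a))*s) from rfl,
    this, integral_comp_add_right_Ioi (fun v => Real.exp (-v^2)) 0 (a*b + π*w/a)]
  rw [zero_add]
  rw [one_div, inv_inv]

end FTHaux

set_option maxHeartbeats 1000000 in
theorem fourier_transform_h (a b : ℝ) (ha : 0 < a) (hb : 0 < b) (w : ℝ) :
    (∫ t : ℝ, (t * (t - b * Complex.I) * Complex.exp (-(a : ℂ) ^ 2 * t ^ 2) /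
        ((t : ℂ) ^ 2 + (b : ℂ) ^ 2)) * Complex.exp (2 * π * Complex.I * t * w)) =
      -(1 / a) * Complex.exp ((a : ℂ) ^ 2 * b ^ 2) *
        (π * a * b * Complex.exp (2 * π * b * w) * (erfc ((a ^ 2 * b + π * w) / a) : ℂ) -
          Real.sqrt π * Complex.exp (-((a : ℂ) ^ 4 * b ^ 2 + π ^ 2 * w ^ 2) / a ^ 2)) := by
  have ha2 : (0:ℝ) < a^2 := by positivity
  -- the Gaussian-times-character function
  set E : ℝ → ℂ := fun t => Complex.exp (-(a:ℂ)^2*t^2 + 2*π*Complex.I*t*w) with hEdef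
  have hEcont : Continuous E := by
    apply Complex.continuous_exp.comp; continuity
  have hEnorm : ∀ t : ℝ, ‖E t‖ = Real.exp (-(a^2) * t^2) := by
    intro t
    rw [hEdef]
    simp only [Complex.norm_exp]
    congr 1
    simp [Complex.add_re, Complex.mul_re, Complex.mul_im, ← Complex.ofReal_pow]
  have hE : Integrable E := by
    have := integrable_cexp_quadratic (b := (a:ℂ)^2)
      (by simp only [← Complex.ofReal_pow, Complex.ofReal_re]; positivity)
      (2*π*Complex.I*w) 0
    refine this.congr ?_
    filter_upwards with t
    rw [hEdef]
    congr 1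
    push_cast
    ring
  have hden : ∀ t : ℝ, ((t:ℂ) + Complex.I*b) ≠ 0 := by
    intro t h
    have := congrArg Complex.im h
    simp at this
    exact hb.ne' this
  have hden2 : ∀ t : ℝ, ((t:ℂ) - b*Complex.I) ≠ 0 := by
    intro t h
    have := congrArg Complex.im h
    simp at this
    exact hb.ne' this
  have hE2 : Integrable (fun t : ℝ => E t / ((t:ℂ) + Complex.I*b)) := by
    refine Integrable.mono' ((integrable_exp_neg_mul_sq ha2).mul_const b⁻¹) ?_ ?_
    · exact (hEcont.div (by continuity) hden).aestronglyMeasurable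
    · filter_upwards with t
      rw [norm_div, hEnorm]
      rw [div_eq_mul_inv]
      have h1 : b ≤ ‖(t:ℂ) + Complex.I*b‖ := by
        calc b = |((t:ℂ) + Complex.I*b).im| := by simp [abs_of_pos hb]
          _ ≤ ‖(t:ℂ) + Complex.I*b‖ := Complex.abs_im_le_norm _
      exact mul_le_mul_of_nonneg_left ((inv_anti₀ hb h1)) (Real.exp_pos _).le
  -- pointwise decomposition
  have hpt : ∀ t : ℝ, (t * (t - b * Complex.I) * Complex.exp (-(a : ℂ) ^ 2 * t ^ 2) /
        ((t : ℂ) ^ 2 + (b : ℂ) ^ 2)) * Complex.exp (2 * π * Complex.I * t * w)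
      = E t - Complex.I*b * (E t / ((t:ℂ) + Complex.I*b)) := by
    intro t
    have hfact : (t:ℂ)^2 + b^2 = ((t:ℂ) + Complex.I*b) * ((t:ℂ) - b*Complex.I) := by
      ring_nf
      rw [Complex.I_sq]
      ring
    have hE' : E t = Complex.exp (-(a:ℂ)^2*t^2) * Complex.exp (2*π*Complex.I*t*w) := by
      rw [hEdef, ← Complex.exp_add]
    have hfrac : (t:ℂ) * ((t:ℂ) - b*Complex.I) / ((t:ℂ)^2 + (b:ℂ)^2)
        = 1 - Complex.I*(b:ℂ)/((t:ℂ) + Complex.I*b) := by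
      rw [hfact, mul_div_mul_right _ _ (hden2 t), eq_sub_iff_add_eq, ← add_div,
        div_eq_one_iff_eq (hden t)]
    rw [hE']
    rw [show ((t:ℂ) * ((t:ℂ) - b * Complex.I) * Complex.exp (-(a:ℂ)^2 * t^2) /
          ((t:ℂ)^2 + (b:ℂ)^2)) * Complex.exp (2 * π * Complex.I * t * w)
        = ((t:ℂ) * ((t:ℂ) - b*Complex.I) / ((t:ℂ)^2 + (b:ℂ)^2)) *
            (Complex.exp (-(a:ℂ)^2*t^2) * Complex.exp (2*π*Complex.I*t*w)) by ring, hfrac]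
    ring
  have hsplit : (∫ t : ℝ, (t * (t - b * Complex.I) * Complex.exp (-(a : ℂ) ^ 2 * t ^ 2) /
        ((t : ℂ) ^ 2 + (b : ℂ) ^ 2)) * Complex.exp (2 * π * Complex.I * t * w))
      = ∫ t : ℝ, (E t - Complex.I*b * (E t / ((t:ℂ) + Complex.I*b))) :=
    integral_congr_ae (Filter.Eventually.of_forall hpt)
  rw [hsplit]
  rw [integral_sub hE (hE2.const_mul _), integral_const_mul]
  -- the Gaussian piece
  have hgauss : ∫ t : ℝ, E t = (Real.sqrt π / a) *
      Complex.exp (-(((2*π*w : ℝ)):ℂ)^2 / (4 * (a:ℂ)^2)) := by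
    rw [← FTHaux.gauss_int ha (2*π*w)]
    apply integral_congr_ae
    filter_upwards with t
    show Complex.exp _ = Complex.exp _
    congr 1
    push_cast
    ring
  -- the second piece via Fubini
  have hpiece2 : ∫ t : ℝ, E t / ((t:ℂ) + Complex.I*b) =
      -Complex.I * ((Real.sqrt π / a : ℝ) : ℂ) *
        ((∫ s in Ioi (0:ℝ), Real.exp (-(s*b) - (s + 2*π*w)^2/(4*a^2)) : ℝ) : ℂ) := by
    have hzre : ∀ t : ℝ, (Complex.I*((t:ℂ) + Complex.I*b)).re < 0 := by
      intro t; simp [hb]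
    have stepA : ∀ t : ℝ, E t / ((t:ℂ) + Complex.I*b) =
        ∫ s in Ioi (0:ℝ), Complex.exp ((Complex.I*((t:ℂ) + Complex.I*b)) * s) *
          (-Complex.I * E t) := by
      intro t
      rw [MeasureTheory.integral_mul_const, FTHaux.integral_cexp_Ioi (hzre t)]
      field_simp
    simp_rw [stepA]
    have hInt : Integrable (Function.uncurry fun (t : ℝ) (s : ℝ) =>
        Complex.exp ((Complex.I*((t:ℂ) + Complex.I*b)) * s) * (-Complex.I * E t))
        (volume.prod (volume.restrict (Ioi 0))) := by
      refine Integrable.mono'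
        (Integrable.mul_prod (integrable_exp_neg_mul_sq ha2) (exp_neg_integrableOn_Ioi 0 hb)) ?_ ?_
      · have hc : Continuous fun p : ℝ × ℝ =>
            Complex.exp ((Complex.I*((p.1:ℂ) + Complex.I*b)) * p.2) * (-Complex.I * E p.1) := by
          apply Continuous.mul
          · exact Complex.continuous_exp.comp (by continuity)
          · exact continuous_const.mul (hEcont.comp continuous_fst)
        exact hc.aestronglyMeasurable
      · refine Filter.Eventually.of_forall fun p => le_of_eq ?_
        show ‖Complex.exp ((Complex.I*((p.1:ℂ) + Complex.I*b)) * p.2) * (-Complex.I * E p.1)‖ = _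
        rw [norm_mul, norm_mul, hEnorm p.1]
        have h1 : ‖Complex.exp ((Complex.I*((p.1:ℂ) + Complex.I*b)) * p.2)‖
            = Real.exp (-b * p.2) := by
          rw [Complex.norm_exp]
          congr 1
          simp [Complex.mul_re, Complex.mul_im]
        rw [h1]
        simp only [norm_neg, Complex.norm_I, one_mul]
        ring
    rw [MeasureTheory.integral_integral_swap hInt]
    have inner : ∀ s : ℝ, (∫ t : ℝ, Complex.exp ((Complex.I*((t:ℂ) + Complex.I*b)) * s) *
          (-Complex.I * E t))
        = -Complex.I * ((Real.sqrt π / a : ℝ) : ℂ) *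
            ((Real.exp (-(s*b) - (s + 2*π*w)^2/(4*a^2)) : ℝ) : ℂ) := by
      intro s
      have hptw : ∀ t : ℝ, Complex.exp ((Complex.I*((t:ℂ) + Complex.I*b)) * s) *
            (-Complex.I * E t)
          = (-Complex.I * Complex.exp (((-(s*b) : ℝ)):ℂ)) *
              Complex.exp (-(a:ℂ)^2*t^2 + Complex.I*(((s + 2*π*w) : ℝ):ℂ)*t) := by
        intro t
        simp only [hEdef]
        rw [show Complex.exp ((Complex.I*((t:ℂ) + Complex.I*b)) * s) *
              (-Complex.I * Complex.exp (-(a:ℂ)^2*t^2 + 2*π*Complex.I*t*w))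
            = -Complex.I * Complex.exp ((Complex.I*((t:ℂ) + Complex.I*b)) * s +
                (-(a:ℂ)^2*t^2 + 2*π*Complex.I*t*w)) by
          simp only [Complex.exp_add]; ring]
        rw [show (-Complex.I * Complex.exp (((-(s*b) : ℝ)):ℂ)) *
              Complex.exp (-(a:ℂ)^2*t^2 + Complex.I*(((s + 2*π*w) : ℝ):ℂ)*t)
            = -Complex.I * Complex.exp ((((-(s*b) : ℝ)):ℂ) +
                (-(a:ℂ)^2*t^2 + Complex.I*(((s + 2*π*w) : ℝ):ℂ)*t)) by
          simp only [Complex.exp_add]; ring]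
        congr 2
        push_cast
        linear_combination ((b:ℂ) * (s:ℂ)) * Complex.I_sq
      rw [integral_congr_ae (Filter.Eventually.of_forall hptw),
        MeasureTheory.integral_const_mul, FTHaux.gauss_int ha (s + 2*π*w)]
      rw [Complex.ofReal_exp]
      rw [show (-Complex.I * Complex.exp (((-(s*b) : ℝ)):ℂ)) *
            ((Real.sqrt π / a) * Complex.exp (-(((s + 2*π*w) : ℝ):ℂ)^2 / (4*(a:ℂ)^2)))
          = -Complex.I * (((Real.sqrt π : ℝ):ℂ) / ((a : ℝ):ℂ)) *
              (Complex.exp (((-(s*b) : ℝ)):ℂ) *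
                Complex.exp (-(((s + 2*π*w) : ℝ):ℂ)^2 / (4*(a:ℂ)^2))) by ring]
      rw [← Complex.exp_add]
      congr 1
      · push_cast; ring
      · congr 1
        push_cast
        ring
    rw [integral_congr_ae (Filter.Eventually.of_forall inner)]
    rw [MeasureTheory.integral_const_mul]
    congr 1
    exact integral_ofReal (𝕜 := ℂ)
  rw [hgauss, hpiece2, FTHaux.K_eval a b w ha]
  -- final algebra
  set J : ℝ := ∫ v in Ioi (a*b + π*w/a), Real.exp (-v^2) with hJdef
  have herfc : (erfc ((a ^ 2 * b + π * w) / a) : ℝ) = 2 / Real.sqrt π * J := by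
    rw [erfc, hJdef]
    congr 2
    field_simp
  rw [herfc]
  have haC : (a:ℂ) ≠ 0 := Complex.ofReal_ne_zero.mpr ha.ne'
  have hsπ : ((Real.sqrt π : ℝ):ℂ) ≠ 0 :=
    Complex.ofReal_ne_zero.mpr (Real.sqrt_pos.mpr Real.pi_pos).ne'
  have hππ : ((Real.sqrt π : ℝ):ℂ) * ((Real.sqrt π : ℝ):ℂ) = (π:ℂ) := by
    norm_cast
    exact Real.mul_self_sqrt Real.pi_pos.le
  have h1 : Complex.exp (-(2*(π:ℂ)*(w:ℂ))^2/(4*(a:ℂ)^2))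
      = Complex.exp ((a:ℂ)^2*(b:ℂ)^2) *
          Complex.exp (-((a:ℂ)^4*(b:ℂ)^2 + (π:ℂ)^2*(w:ℂ)^2)/(a:ℂ)^2) := by
    rw [← Complex.exp_add]
    congr 1
    push_cast
    field_simp
    ring
  have h2 : ((Real.exp (a^2*b^2 + 2*π*b*w) : ℝ):ℂ)
      = Complex.exp ((a:ℂ)^2*(b:ℂ)^2) * Complex.exp (2*(π:ℂ)*(b:ℂ)*(w:ℂ)) := by
    rw [Complex.ofReal_exp, ← Complex.exp_add]
    norm_cast
  push_cast [h2]
  rw [h1]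
  field_simp
  linear_combination (2*(a:ℂ)*(b:ℂ)*(J:ℂ)*Complex.exp ((b:ℂ)*(π:ℂ)*(w:ℂ)*2) *
      ((Real.sqrt π : ℝ):ℂ)^2) * Complex.I_sq
    - (2*(a:ℂ)*(b:ℂ)*(J:ℂ)*Complex.exp ((b:ℂ)*(π:ℂ)*(w:ℂ)*2)) * hππ
end

section
/- For g = [[a,b],[c,d]] ∈ SL₂(ℝ) with c ≠ 0 and a + rc ≠ 0, and X' = m·[[1, 2r],[0, -1]] (m > 0), there exists δ > 0 such that for all z = x+iy with y > 1, e^{-2πR(X', g·z)} ≤ e^{-δ(|cz+d|² + |(a+rc)z+b+rd|²)} e^{-δy²}, where R(X', g·z) = 2m²|cz+d|²|(a+rc)z+b+rd|²/y². -/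
open Real Complex

theorem gaussian_boundary_decay (m r a b c d : ℝ) (hm : 0 < m)
    (hdet : a * d - b * c = 1) (hc : c ≠ 0) (harc : a + r * c ≠ 0) :
    ∃ δ > 0, ∀ x y : ℝ, 1 < y →
      Real.exp (-2 * π * (2 * m ^ 2 * ‖(c * (x + y * Complex.I) + d : ℂ)‖ ^ 2 *
          ‖((a + r * c) * (x + y * Complex.I) + b + r * d : ℂ)‖ ^ 2 / y ^ 2)) ≤
        Real.exp (-δ * (‖(c * (x + y * Complex.I) + d : ℂ)‖ ^ 2 +
            ‖((a + r * c) * (x + y * Complex.I) + b + r * d : ℂ)‖ ^ 2)) *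
          Real.exp (-δ * y ^ 2) := by
  have hc2 : (0:ℝ) < c ^ 2 := by positivity
  have hs2 : (0:ℝ) < (a + r * c) ^ 2 := by positivity
  set ε : ℝ := min (c ^ 2) (min ((a + r * c) ^ 2) (c ^ 2 * (a + r * c) ^ 2)) with hε
  have hεpos : 0 < ε := lt_min hc2 (lt_min hs2 (mul_pos hc2 hs2))
  have hε1 : ε ≤ c ^ 2 := min_le_left _ _
  have hε2 : ε ≤ (a + r * c) ^ 2 := min_le_right _ _ |>.trans (min_le_left _ _) |>.trans le_rfl
  have hε3 : ε ≤ c ^ 2 * (a + r * c) ^ 2 :=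
    (min_le_right _ _).trans (min_le_right _ _)
  refine ⟨4 * π * m ^ 2 / 3 * ε, by positivity, ?_⟩
  intro x y hy
  have hy0 : (0:ℝ) < y := lt_trans one_pos hy
  have habs : ∀ p q : ℝ, ‖((p : ℂ) * (x + y * Complex.I) + q)‖ ^ 2
      = (p * x + q) ^ 2 + (p * y) ^ 2 := by
    intro p q
    rw [Complex.sq_norm, Complex.normSq_apply]
    simp [Complex.add_re, Complex.add_im, Complex.mul_re, Complex.mul_im]
    ring
  set A : ℝ := ‖((c:ℂ) * (x + y * Complex.I) + d)‖ ^ 2 with hA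
  set B : ℝ := ‖(((a:ℂ) + (r:ℂ) * (c:ℂ)) * (x + y * Complex.I) + b + r * d)‖ ^ 2 with hB
  have hAval : A = (c * x + d) ^ 2 + (c * y) ^ 2 := habs c d
  have hBval : B = ((a + r * c) * x + (b + r * d)) ^ 2 + ((a + r * c) * y) ^ 2 := by
    rw [hB]
    have : (((a:ℂ) + (r:ℂ) * (c:ℂ)) * (x + y * Complex.I) + b + r * d)
        = (((a + r * c : ℝ) : ℂ) * (x + y * Complex.I) + ((b + r * d : ℝ) : ℂ)) := by
      push_cast; ring
    rw [this, habs (a + r * c) (b + r * d)]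
  have hAge : c ^ 2 * y ^ 2 ≤ A := by rw [hAval]; nlinarith [sq_nonneg (c * x + d)]
  have hBge : (a + r * c) ^ 2 * y ^ 2 ≤ B := by
    rw [hBval]; nlinarith [sq_nonneg ((a + r * c) * x + (b + r * d))]
  have hA0 : 0 ≤ A := by rw [hAval]; positivity
  have hB0 : 0 ≤ B := by rw [hBval]; positivity
  have hy2 : (0:ℝ) < y ^ 2 := by positivity
  have h1 : ε * B ≤ A * B / y ^ 2 := by
    rw [le_div_iff₀ hy2]
    have t1 : ε * y ^ 2 ≤ c ^ 2 * y ^ 2 := mul_le_mul_of_nonneg_right hε1 hy2.le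
    have t2 : ε * y ^ 2 * B ≤ c ^ 2 * y ^ 2 * B := mul_le_mul_of_nonneg_right t1 hB0
    have t3 : c ^ 2 * y ^ 2 * B ≤ A * B := mul_le_mul_of_nonneg_right hAge hB0
    linarith
  have h2 : ε * A ≤ A * B / y ^ 2 := by
    rw [le_div_iff₀ hy2]
    have t1 : ε * y ^ 2 ≤ (a + r * c) ^ 2 * y ^ 2 := mul_le_mul_of_nonneg_right hε2 hy2.le
    have t2 : ε * y ^ 2 * A ≤ (a + r * c) ^ 2 * y ^ 2 * A := mul_le_mul_of_nonneg_right t1 hA0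
    have t3 : (a + r * c) ^ 2 * y ^ 2 * A ≤ B * A := mul_le_mul_of_nonneg_right hBge hA0
    linarith
  have h3 : ε * y ^ 2 ≤ A * B / y ^ 2 := by
    rw [le_div_iff₀ hy2]
    have t1 : ε * y ^ 2 ≤ c ^ 2 * (a + r * c) ^ 2 * y ^ 2 := mul_le_mul_of_nonneg_right hε3 hy2.le
    have t2 : ε * y ^ 2 * y ^ 2 ≤ c ^ 2 * (a + r * c) ^ 2 * y ^ 2 * y ^ 2 :=
      mul_le_mul_of_nonneg_right t1 hy2.le
    have u1 : c ^ 2 * y ^ 2 * ((a + r * c) ^ 2 * y ^ 2) ≤ A * ((a + r * c) ^ 2 * y ^ 2) :=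
      mul_le_mul_of_nonneg_right hAge (by positivity)
    have u2 : A * ((a + r * c) ^ 2 * y ^ 2) ≤ A * B := mul_le_mul_of_nonneg_left hBge hA0
    nlinarith [t2, u1, u2]
  have hK : (0:ℝ) ≤ 4 * π * m ^ 2 / 3 := by positivity
  have key : 4 * π * m ^ 2 / 3 * ε * (A + B + y ^ 2) ≤ 4 * π * m ^ 2 * (A * B / y ^ 2) := by
    have := mul_le_mul_of_nonneg_left h1 hK
    have := mul_le_mul_of_nonneg_left h2 hK
    have := mul_le_mul_of_nonneg_left h3 hK
    linarith
  rw [← Real.exp_add, Real.exp_le_exp]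
  have heq : -2 * π * (2 * m ^ 2 * A * B / y ^ 2) = -(4 * π * m ^ 2 * (A * B / y ^ 2)) := by
    ring
  rw [heq]
  linarith [key]
end

section
/- For m a positive integer, ∑_{n ∈ ℤ} (1/T) e^{-π v (nβ + k)² / T²} → 1/(β√v) as T → ∞, for any fixed real k, real β > 0, and v > 0. -/
/-!
With `t = v β² / T²` the sum is `(1 / T) · evenKernel (k / β) t`, where
`evenKernel a t = ∑ₙ exp (-π (n + a)² t)`, and `1 / T = √t / (β √v)`.
Poisson summation (the theta transformation `evenKernel_functional_equation`) gives
`√t · evenKernel a t = cosKernel a (1 / t)`, and `cosKernel a x → 1` as `x → ∞` because all of its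
terms except `n = 0` decay like `exp (-π x)`.
-/

open Real Filter Topology HurwitzZeta

theorem HurwitzZeta.tendsto_cosKernel_atTop (a : UnitAddCircle) :
    Tendsto (cosKernel a) atTop (𝓝 1) := by
  obtain ⟨p, hp, hO⟩ := isBigO_atTop_cosKernel_sub a
  have hexp : Tendsto (fun x ↦ rexp (-p * x)) atTop (𝓝 0) :=
    tendsto_exp_atBot.comp (tendsto_id.const_mul_atTop_of_neg (neg_lt_zero.mpr hp))
  simpa using (hO.trans_tendsto hexp).add_const 1

theorem HurwitzZeta.tendsto_sqrt_mul_evenKernel_nhdsGT_zero (a : UnitAddCircle) :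
    Tendsto (fun t ↦ √t * evenKernel a t) (𝓝[>] 0) (𝓝 1) := by
  refine ((tendsto_cosKernel_atTop a).comp tendsto_inv_nhdsGT_zero).congr' ?_
  filter_upwards [self_mem_nhdsWithin] with t (ht : 0 < t)
  rw [evenKernel_functional_equation, sqrt_eq_rpow, ← mul_assoc,
    mul_one_div_cancel (rpow_pos_of_pos ht _).ne', one_mul, one_div, Function.comp_apply]

theorem tsum_exp_neg_mul_sq_eq_evenKernel {v β T : ℝ} (k : ℝ) (hv : 0 < v) (hβ : β ≠ 0)
    (hT : T ≠ 0) :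
    ∑' n : ℤ, rexp (-π * v * (n * β + k) ^ 2 / T ^ 2) =
      evenKernel (k / β : ℝ) (v * β ^ 2 / T ^ 2) := by
  rw [← (hasSum_int_evenKernel (k / β) (by positivity)).tsum_eq]
  refine tsum_congr fun n ↦ ?_
  congr 1
  field_simp

theorem gaussian_sum_limit_general (v β k : ℝ) (hv : 0 < v) (hβ : 0 < β) :
    Tendsto (fun T : ℝ => ∑' n : ℤ, (1 / T) * Real.exp (-π * v * (n * β + k) ^ 2 / T ^ 2))
      atTop (nhds (1 / (β * Real.sqrt v))) := by
  have ht : Tendsto (fun T : ℝ ↦ v * β ^ 2 / T ^ 2) atTop (𝓝[>] 0) := by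
    refine tendsto_nhdsWithin_iff.mpr ⟨(tendsto_pow_atTop two_ne_zero).const_div_atTop _, ?_⟩
    filter_upwards [eventually_gt_atTop 0] with T hT
    show 0 < v * β ^ 2 / T ^ 2
    positivity
  have hsum : ∀ T > 0, ∑' n : ℤ, (1 / T) * rexp (-π * v * (n * β + k) ^ 2 / T ^ 2) =
      1 / (β * √v) * (√(v * β ^ 2 / T ^ 2) * evenKernel (k / β : ℝ) (v * β ^ 2 / T ^ 2)) := by
    intro T hT
    have hsqrt : √(v * β ^ 2 / T ^ 2) = β * √v / T := by
      rw [sqrt_div' _ (sq_nonneg _), sqrt_mul hv.le, sqrt_sq hβ.le, sqrt_sq hT.le, mul_comm]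
    have hv' : 0 < √v := sqrt_pos.mpr hv
    rw [tsum_mul_left, tsum_exp_neg_mul_sq_eq_evenKernel k hv hβ.ne' hT.ne', hsqrt]
    field_simp
  simpa using ((tendsto_sqrt_mul_evenKernel_nhdsGT_zero _).comp ht).const_mul (1 / (β * √v))
    |>.congr' (eventually_gt_atTop 0 |>.mono fun T hT ↦ (hsum T hT).symm)

theorem gaussian_sum_limit (m : ℕ) (hm : 0 < m) (v β k : ℝ) (hv : 0 < v) (hβ : 0 < β) :
    Tendsto (fun T : ℝ => ∑' n : ℤ, (1 / T) * Real.exp (-π * v * (n * β + k) ^ 2 / T ^ 2))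
      atTop (nhds (1 / (β * Real.sqrt v))) :=
  gaussian_sum_limit_general v β k hv hβ
end
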